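/- arXiv:0712.3635 — 4 statements merged into one kernel-verified Lean document; each statement's English description precedes it below -/
import Mathlib

section
/- Take Ω = [0,1] with Lebesgue measure, X(ω) = ω and K = 1/2. For any 0 < ε < 1 define X̂ = X on [0, 1/2 − ε/2) ∪ (1/2 + ε/2, 1], X̂ = X + ε/2 on [1/2 − ε/2, 1/2], and X̂ = X − ε/2 on (1/2, 1/2 + ε/2]. Then E|X − X̂|^p = ε^{p+1}/2^p and E|χ_{[1/2,∞)}(X) − χ_{[1/2,∞)}(X̂)| = ε. -/
open MeasureTheory Set

/-!
On `[K - δ, K + δ]` the perturbation moves every point by exactly `δ` and carries it across the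
threshold `K` (up to the two points `K`, `K + δ`); outside it changes nothing. Hence
`|X - X̂| ^ p = δ ^ p` and `|χ(X) - χ(X̂)| = 1` on an interval of length `2δ` and both vanish
elsewhere, so with `δ = ε / 2` the two expectations are `ε (ε / 2) ^ p` and `ε`.
-/

noncomputable def swapAround (K δ x : ℝ) : ℝ :=
  if x ∈ Icc (K - δ) K then x + δ else if x ∈ Ioc K (K + δ) then x - δ else x

section

variable {K δ : ℝ}

theorem abs_sub_swapAround (hδ : 0 ≤ δ) (x : ℝ) :
    |x - swapAround K δ x| = (Icc (K - δ) (K + δ)).indicator (fun _ => δ) x := by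
  unfold swapAround
  split_ifs with h₁ h₂
  · rw [indicator_of_mem (show x ∈ Icc (K - δ) (K + δ) from ⟨h₁.1, by linarith [h₁.2]⟩),
      sub_add_cancel_left, abs_neg, abs_of_nonneg hδ]
  · rw [indicator_of_mem (show x ∈ Icc (K - δ) (K + δ) from ⟨by linarith [h₂.1], h₂.2⟩),
      sub_sub_cancel, abs_of_nonneg hδ]
  · rw [indicator_of_notMem fun h => h₂ ⟨lt_of_not_ge fun h' => h₁ ⟨h.1, h'⟩, h.2⟩,
      sub_self, abs_zero]

theorem abs_sub_swapAround_rpow (hδ : 0 ≤ δ) {p : ℝ} (hp : p ≠ 0) (x : ℝ) :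
    |x - swapAround K δ x| ^ p = (Icc (K - δ) (K + δ)).indicator (fun _ => δ ^ p) x := by
  rw [abs_sub_swapAround hδ]
  exact congrFun (indicator_comp_of_zero (g := (· ^ p)) (Real.zero_rpow hp)).symm x

theorem abs_indicator_Ici_sub_swapAround (hδ : 0 ≤ δ) {x : ℝ} (hxK : x ≠ K) (hxKδ : x ≠ K + δ) :
    |(Ici K).indicator (fun _ => (1 : ℝ)) x - (Ici K).indicator (fun _ => 1) (swapAround K δ x)|
      = (Icc (K - δ) (K + δ)).indicator (fun _ => 1) x := by
  unfold swapAround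
  split_ifs with h₁ h₂
  · have hx : x < K := lt_of_le_of_ne h₁.2 hxK
    rw [indicator_of_notMem (show x ∉ Ici K from not_le.2 hx),
      indicator_of_mem (show x + δ ∈ Ici K from mem_Ici.2 (by linarith [h₁.1])),
      indicator_of_mem (show x ∈ Icc (K - δ) (K + δ) from ⟨h₁.1, by linarith⟩)]
    norm_num
  · have hx : x < K + δ := lt_of_le_of_ne h₂.2 hxKδ
    rw [indicator_of_mem (mem_Ici.2 h₂.1.le),
      indicator_of_notMem (show x - δ ∉ Ici K from not_le.2 (show x - δ < K by linarith)),
      indicator_of_mem (show x ∈ Icc (K - δ) (K + δ) from ⟨by linarith [h₂.1], h₂.2⟩)]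
    norm_num
  · rw [sub_self, abs_zero,
      indicator_of_notMem fun h => h₂ ⟨lt_of_not_ge fun h' => h₁ ⟨h.1, h'⟩, h.2⟩]

theorem abs_indicator_Ici_sub_swapAround_ae (hδ : 0 ≤ δ) :
    (fun x => |(Ici K).indicator (fun _ => (1 : ℝ)) x
        - (Ici K).indicator (fun _ => 1) (swapAround K δ x)|)
      =ᵐ[volume] (Icc (K - δ) (K + δ)).indicator (fun _ => 1) := by
  have hnull : ∀ᵐ x : ℝ, x ∉ ({K, K + δ} : Set ℝ) :=
    measure_eq_zero_iff_ae_notMem.1 ((toFinite {K, K + δ}).measure_zero volume)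
  filter_upwards [hnull] with x hx
  simp only [mem_insert_iff, mem_singleton_iff, not_or] at hx
  exact abs_indicator_Ici_sub_swapAround hδ hx.1 hx.2

end

theorem setIntegral_indicator_const_of_subset {α : Type*} [MeasurableSpace α] {μ : Measure α}
    {s t : Set α} (hs : MeasurableSet s) (hst : s ⊆ t) (c : ℝ) :
    ∫ x in t, s.indicator (fun _ => c) x ∂μ = μ.real s * c := by
  rw [integral_indicator_const c hs, measureReal_restrict_apply hs, inter_eq_left.2 hst,
    smul_eq_mul]

/-- The optimality example: on `Ω = [0,1]` with Lebesgue measure, `X(ω) = ω`, `K = 1/2`,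
and `X̂` obtained from `X` by shifting by `±ε/2` around `1/2`, one has
`E|X − X̂|^p = ε^{p+1}/2^p` and `E|χ_[1/2,∞)(X) − χ_[1/2,∞)(X̂)| = ε`. -/
theorem optimality_example (ε p : ℝ) (hε : 0 < ε) (hε1 : ε < 1) (hp : 0 < p) :
    (∫ x in Set.Icc (0 : ℝ) 1,
        |x - (if x ∈ Set.Icc (1 / 2 - ε / 2) (1 / 2) then x + ε / 2
              else if x ∈ Set.Ioc (1 / 2 : ℝ) (1 / 2 + ε / 2) then x - ε / 2
              else x)| ^ p) = ε ^ (p + 1) / 2 ^ p ∧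
    (∫ x in Set.Icc (0 : ℝ) 1,
        |Set.indicator (Set.Ici (1 / 2 : ℝ)) (fun _ => (1 : ℝ)) x -
         Set.indicator (Set.Ici (1 / 2 : ℝ)) (fun _ => (1 : ℝ))
           (if x ∈ Set.Icc (1 / 2 - ε / 2) (1 / 2) then x + ε / 2
            else if x ∈ Set.Ioc (1 / 2 : ℝ) (1 / 2 + ε / 2) then x - ε / 2
            else x)|) = ε := by
  change (∫ x in Icc (0 : ℝ) 1, |x - swapAround (1 / 2) (ε / 2) x| ^ p) = _ ∧
    (∫ x in Icc (0 : ℝ) 1, |(Ici (1 / 2 : ℝ)).indicator (fun _ => (1 : ℝ)) x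
      - (Ici (1 / 2 : ℝ)).indicator (fun _ => 1) (swapAround (1 / 2) (ε / 2) x)|) = ε
  have hδ : 0 ≤ ε / 2 := by positivity
  have hsub : Icc (1 / 2 - ε / 2) (1 / 2 + ε / 2) ⊆ Icc (0 : ℝ) 1 :=
    Icc_subset_Icc (by linarith) (by linarith)
  have hlen : volume.real (Icc (1 / 2 - ε / 2) (1 / 2 + ε / 2)) = ε := by
    rw [Real.volume_real_Icc_of_le (by linarith)]; ring
  constructor
  · simp_rw [abs_sub_swapAround_rpow hδ hp.ne']
    rw [setIntegral_indicator_const_of_subset measurableSet_Icc hsub, hlen,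
      Real.rpow_add_one hε.ne', Real.div_rpow hε.le zero_le_two]
    field_simp
  · rw [integral_congr_ae (ae_restrict_of_ae (abs_indicator_Ici_sub_swapAround_ae hδ)),
      setIntegral_indicator_const_of_subset measurableSet_Icc hsub, hlen, mul_one]
end

section
/- Fix p ∈ [1,∞) and a bump function φ (i.e., 0 < φ ≤ 1, φ increasing on (−∞,0], decreasing on (0,∞), φ(z) → 0 as |z| → ∞). Then the decomposition g = c + g^μ + Δ_A of a function g in the class G_{p,φ} is unique: if c₁ + g^{μ₁} + Δ_{A₁} = c₂ + g^{μ₂} + Δ_{A₂} pointwise, then c₁ = c₂, g^{μ₁} = g^{μ₂}, and Δ_{A₁} = Δ_{A₂}. -/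
open MeasureTheory Filter Set

/-- A bump function: strictly positive, at most `1`, increasing on `(−∞,0]`,
decreasing on `(0,∞)`, vanishing at `±∞`. -/
def IsBump (φ : ℝ → ℝ) : Prop :=
  (∀ z, 0 < φ z) ∧ (∀ z, φ z ≤ 1) ∧ MonotoneOn φ (Set.Iic (0 : ℝ)) ∧
    AntitoneOn φ (Set.Ioi (0 : ℝ)) ∧
    Tendsto φ atTop (nhds 0) ∧ Tendsto φ atBot (nhds 0)

/-- The function `g^μ(x) = ∫_{(0,x]} φ dμ` (for `x ≥ 0`), `= ∫_{(x,0]} φ dμ` (for `x < 0`),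
where the (σ-finite) signed measure `μ` is represented by its Jordan pair `(μp, μn)`. -/
noncomputable def gMu (φ : ℝ → ℝ) (μp μn : Measure ℝ) (x : ℝ) : ℝ :=
  if 0 ≤ x then (∫ z in Set.Ioc 0 x, φ z ∂μp) - ∫ z in Set.Ioc 0 x, φ z ∂μn
  else (∫ z in Set.Ioc x 0, φ z ∂μp) - ∫ z in Set.Ioc x 0, φ z ∂μn

/-- `IsGRep p φ g c μp μn Δ` says that `g = c + g^μ + Δ_A` is a representation of `g`
in the class `G_{p,φ}`: `μ = μp − μn` is a signed measure with σ-finite total variation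
`|μ| = μp + μn` (`μp ⟂ μn`), `φ` is locally `|μ|`-integrable and `|μ|`-integrable when
raised to the power `1 + 1/p`, and the jump part `Δ` (with `Δ(a_i) = λ_i φ(a_i)`) is
supported on a countable set with `∑ |λ_i| φ(a_i)^{1+1/p} = ∑ |Δ(a_i)| φ(a_i)^{1/p} < ∞`. -/
def IsGRep (p : ℝ) (φ : ℝ → ℝ) (g : ℝ → ℝ)
    (c : ℝ) (μp μn : Measure ℝ) (Δ : ℝ → ℝ) : Prop :=
  SigmaFinite μp ∧ SigmaFinite μn ∧ Measure.MutuallySingular μp μn ∧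
  (∀ x : ℝ, IntegrableOn φ (Set.Ioc 0 x) μp ∧ IntegrableOn φ (Set.Ioc x 0) μp ∧
            IntegrableOn φ (Set.Ioc 0 x) μn ∧ IntegrableOn φ (Set.Ioc x 0) μn) ∧
  Integrable (fun z => φ z ^ (1 + 1 / p)) (μp + μn) ∧
  (Function.support Δ).Countable ∧
  Summable (fun x : ℝ => |Δ x| * φ x ^ (1 / p)) ∧
  ∀ x, g x = c + gMu φ μp μn x + Δ x

/-- Membership in the class `G_{p,φ}`. -/
def MemG (p : ℝ) (φ : ℝ → ℝ) (g : ℝ → ℝ) : Prop :=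
  ∃ c μp μn Δ, IsGRep p φ g c μp μn Δ

/-- The `(p,φ)`-variation `V_{p,φ}(g) = ∫ φ^{1+1/p} d|μ| + ∑ |λ_i| φ(a_i)^{1+1/p}`
of a representation. -/
noncomputable def Vpphi (p : ℝ) (φ : ℝ → ℝ) (μp μn : Measure ℝ) (Δ : ℝ → ℝ) : ℝ :=
  (∫ z, φ z ^ (1 + 1 / p) ∂(μp + μn)) + ∑' x : ℝ, |Δ x| * φ x ^ (1 / p)

/-!
The two `g^μ` parts are right-continuous: by dominated convergence the integral of `φ` over
`(x, y]` tends to `0` as `y ↓ x`. Hence `c₁ - c₂ + g^{μ₁} - g^{μ₂} = Δ₂ - Δ₁` is a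
right-continuous function vanishing off a countable set. The complement of a countable set
accumulates at every point from the right, so this function is identically `0`; evaluating at
`0`, where every `g^μ` vanishes, gives `c₁ = c₂`.
-/

open Topology

section RightContinuity

variable {E : Type*} [NormedAddCommGroup E] [NormedSpace ℝ E]

theorem tendsto_setIntegral_Ioc_nhdsGT {f : ℝ → E} {ν : Measure ℝ} {x b : ℝ} (hxb : x < b)
    (hf : IntegrableOn f (Ioc x b) ν) :
    Tendsto (fun y => ∫ z in Ioc x y, f z ∂ν) (𝓝[>] x) (𝓝 0) := by
  have hsmall : Ioo x b ∈ 𝓝[>] x := Ioo_mem_nhdsGT hxb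
  simp_rw [← integral_indicator measurableSet_Ioc]
  rw [← integral_zero ℝ E]
  refine tendsto_integral_filter_of_dominated_convergence ((Ioc x b).indicator (‖f ·‖)) ?_ ?_
    ((integrable_indicator_iff measurableSet_Ioc).2 hf.norm) ?_
  · filter_upwards [hsmall] with y hy
    exact (aestronglyMeasurable_indicator_iff measurableSet_Ioc).2
      (hf.mono_set (Ioc_subset_Ioc_right hy.2.le)).aestronglyMeasurable
  · filter_upwards [hsmall] with y hy
    refine ae_of_all _ fun z => ?_
    rw [← norm_indicator_eq_indicator_norm]
    exact norm_indicator_le_of_subset (Ioc_subset_Ioc_right hy.2.le) f z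
  · refine ae_of_all _ fun z => tendsto_const_nhds.congr' ?_
    have hz : ∀ᶠ y in 𝓝[>] x, z ∉ Ioc x y := by
      rcases lt_or_ge x z with hxz | hzx
      · filter_upwards [Ioo_mem_nhdsGT hxz] with y hy using fun h => (h.2.trans_lt hy.2).false
      · exact Eventually.of_forall fun y h => (h.1.trans_le hzx).false
    filter_upwards [hz] with y hy
    rw [indicator_of_notMem hy]

theorem continuousWithinAt_Ioi_intervalIntegral {f : ℝ → E} {ν : Measure ℝ} (a x : ℝ)
    (hf : ∀ b c, IntervalIntegrable f ν b c) :
    ContinuousWithinAt (fun y => ∫ z in a..y, f z ∂ν) (Ioi x) x := by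
  have hsplit : ∀ᶠ y in 𝓝[>] x,
      (∫ z in a..x, f z ∂ν) + ∫ z in Ioc x y, f z ∂ν = ∫ z in a..y, f z ∂ν := by
    filter_upwards [self_mem_nhdsWithin] with y hy
    rw [← intervalIntegral.integral_of_le (le_of_lt hy),
      intervalIntegral.integral_add_adjacent_intervals (hf a x) (hf x y)]
  change Tendsto _ (𝓝[>] x) _
  simpa using ((tendsto_setIntegral_Ioc_nhdsGT (lt_add_one x)
    (hf x (x + 1)).1).const_add (∫ z in a..x, f z ∂ν)).congr' hsplit

end RightContinuity

theorem ContinuousWithinAt.Ioi_ite_nonneg_neg {E : Type*} [TopologicalSpace E] [Neg E]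
    [ContinuousNeg E] {P : ℝ → E} {x : ℝ}
    (hP : ContinuousWithinAt P (Ioi x) x) :
    ContinuousWithinAt (fun y => if 0 ≤ y then P y else -P y) (Ioi x) x := by
  rcases le_or_gt 0 x with hx | hx
  · refine hP.congr_of_eventuallyEq ?_ (if_pos hx)
    filter_upwards [self_mem_nhdsWithin] with y hy
    exact if_pos (hx.trans (le_of_lt hy))
  · refine hP.neg.congr_of_eventuallyEq ?_ (if_neg (not_le.2 hx))
    filter_upwards [Ioo_mem_nhdsGT hx] with y hy
    exact if_neg (not_le.2 hy.2)

theorem eq_zero_of_continuousWithinAt_Ioi_of_countable_support {E : Type*}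
    [TopologicalSpace E] [T1Space E] [Zero E] {f : ℝ → E}
    (hf : ∀ x, ContinuousWithinAt f (Ioi x) x) (hs : (Function.support f).Countable) :
    f = 0 := by
  funext x
  set s := Ioi x ∩ (Function.support f)ᶜ
  have hx : x ∈ closure s := by
    have : Ioi x ⊆ closure s := (hs.dense_compl ℝ).open_subset_closure_inter isOpen_Ioi
    exact closure_minimal this isClosed_closure (closure_Ioi x ▸ self_mem_Ici)
  have himage : f '' s ⊆ {0} := by
    rintro _ ⟨y, hy, rfl⟩
    exact Function.notMem_support.1 hy.2
  simpa using closure_mono himage (((hf x).mono inter_subset_left).mem_closure_image hx)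

theorem gMu_eq_ite (φ : ℝ → ℝ) (μp μn : Measure ℝ) (x : ℝ) :
    gMu φ μp μn x = if 0 ≤ x then (∫ z in 0..x, φ z ∂μp) - ∫ z in 0..x, φ z ∂μn
      else -((∫ z in 0..x, φ z ∂μp) - ∫ z in 0..x, φ z ∂μn) := by
  unfold gMu
  split_ifs with hx
  · rw [intervalIntegral.integral_of_le hx, intervalIntegral.integral_of_le hx]
  · rw [intervalIntegral.integral_of_ge (not_le.1 hx).le,
      intervalIntegral.integral_of_ge (not_le.1 hx).le]
    ring

theorem gMu_zero (φ : ℝ → ℝ) (μp μn : Measure ℝ) : gMu φ μp μn 0 = 0 := by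
  simp [gMu]

theorem IsGRep.continuousWithinAt_gMu {p : ℝ} {φ g : ℝ → ℝ} {c : ℝ} {μp μn : Measure ℝ}
    {Δ : ℝ → ℝ} (h : IsGRep p φ g c μp μn Δ) (x : ℝ) :
    ContinuousWithinAt (gMu φ μp μn) (Ioi x) x := by
  obtain ⟨-, -, -, hint, -⟩ := h
  have hp : ∀ a b, IntervalIntegrable φ μp a b := fun a b =>
    (IntervalIntegrable.symm ⟨(hint a).1, (hint a).2.1⟩).trans ⟨(hint b).1, (hint b).2.1⟩
  have hn : ∀ a b, IntervalIntegrable φ μn a b := fun a b =>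
    (IntervalIntegrable.symm ⟨(hint a).2.2.1, (hint a).2.2.2⟩).trans
      ⟨(hint b).2.2.1, (hint b).2.2.2⟩
  rw [show gMu φ μp μn = _ from funext (gMu_eq_ite φ μp μn)]
  exact ((continuousWithinAt_Ioi_intervalIntegral 0 x hp).sub
    (continuousWithinAt_Ioi_intervalIntegral 0 x hn)).Ioi_ite_nonneg_neg

theorem G_decomposition_unique_general (p : ℝ) (φ : ℝ → ℝ)
    (g : ℝ → ℝ) (c₁ c₂ : ℝ) (μp₁ μn₁ μp₂ μn₂ : Measure ℝ) (Δ₁ Δ₂ : ℝ → ℝ)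
    (h₁ : IsGRep p φ g c₁ μp₁ μn₁ Δ₁) (h₂ : IsGRep p φ g c₂ μp₂ μn₂ Δ₂) :
    c₁ = c₂ ∧ (∀ x, gMu φ μp₁ μn₁ x = gMu φ μp₂ μn₂ x) ∧ Δ₁ = Δ₂ := by
  have hr₁ := h₁.continuousWithinAt_gMu
  have hr₂ := h₂.continuousWithinAt_gMu
  obtain ⟨-, -, -, -, -, hA₁, -, hg₁⟩ := h₁
  obtain ⟨-, -, -, -, -, hA₂, -, hg₂⟩ := h₂
  set D := fun x => gMu φ μp₁ μn₁ x - gMu φ μp₂ μn₂ x + (c₁ - c₂)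
  have hD : D = Δ₂ - Δ₁ := funext fun x => by
    simp only [D, Pi.sub_apply]
    linarith [hg₁ x, hg₂ x]
  have hD0 : D = 0 := eq_zero_of_continuousWithinAt_Ioi_of_countable_support
    (fun x => ((hr₁ x).sub (hr₂ x)).add continuousWithinAt_const)
    (hD ▸ (hA₂.union hA₁).mono (Function.support_sub _ _))
  have hc : c₁ = c₂ := by
    simpa [D, gMu_zero, sub_eq_zero] using congr_fun hD0 0
  have hg : ∀ x, gMu φ μp₁ μn₁ x = gMu φ μp₂ μn₂ x := fun x => by
    simpa [D, hc, sub_eq_zero] using congr_fun hD0 x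
  exact ⟨hc, hg, (sub_eq_zero.1 (hD.symm.trans hD0)).symm⟩

/-- Uniqueness of the decomposition `g = c + g^μ + Δ_A` of a function in `G_{p,φ}`. -/
theorem G_decomposition_unique (p : ℝ) (hp : 1 ≤ p) (φ : ℝ → ℝ) (hφ : IsBump φ)
    (g : ℝ → ℝ) (c₁ c₂ : ℝ) (μp₁ μn₁ μp₂ μn₂ : Measure ℝ) (Δ₁ Δ₂ : ℝ → ℝ)
    (h₁ : IsGRep p φ g c₁ μp₁ μn₁ Δ₁) (h₂ : IsGRep p φ g c₂ μp₂ μn₂ Δ₂) :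
    c₁ = c₂ ∧ (∀ x, gMu φ μp₁ μn₁ x = gMu φ μp₂ μn₂ x) ∧ Δ₁ = Δ₂ :=
  G_decomposition_unique_general p φ g c₁ c₂ μp₁ μn₁ μp₂ μn₂ Δ₁ Δ₂ h₁ h₂
end

section
/- Fix p ∈ [1,∞) and a bump function φ. Then every function g of bounded variation on ℝ belongs to the class G_{p,φ}, with V_{p,φ}(g) bounded by a constant multiple depending only on V(g). -/
open MeasureTheory Filter Set

/-! Write `g = a - b` with `a`, `b` monotone and `a + b` the variation function of `g`, so that
the Lebesgue–Stieltjes measures `da`, `db` have joint total mass at most `V(g)`. Replacing `a`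
and `b` by their right-continuous versions leaves a jump function `Δ` dominated pointwise by
the atoms of `da + db`. The Jordan decomposition of `da - db` gives mutually singular measures
of total mass at most that of `da + db`, and reweighting them by `1/φ` makes `g^μ` reproduce
the continuous part. Since `φ ≤ 1`, both `∫ φ^{1+1/p} d|μ|` and `∑ |Δ| φ^{1/p}` are bounded by
the mass of `da + db`, whence the bound `2 V(g)`. -/

theorem measurable_of_monotoneOn_Iic_of_antitoneOn_Ioi {f : ℝ → ℝ} {c : ℝ}
    (hf₁ : MonotoneOn f (Iic c)) (hf₂ : AntitoneOn f (Ioi c)) : Measurable f := by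
  refine measurable_of_restrict_of_restrict_compl (measurableSet_Iic (a := c)) ?_ ?_
  · exact Monotone.measurable fun x y hxy => hf₁ x.2 y.2 hxy
  · rw [compl_Iic]
    exact Antitone.measurable fun x y hxy => hf₂ x.2 y.2 hxy

theorem exists_monotone_sub_of_boundedVariationOn {g : ℝ → ℝ} (hg : BoundedVariationOn g univ) :
    ∃ a b : ℝ → ℝ, Monotone a ∧ Monotone b ∧ (∀ x, g x = a x - b x) ∧
      ∀ x y, x ≤ y → a y + b y - (a x + b x) ≤ (eVariationOn g univ).toReal := by
  have hloc := hg.locallyBoundedVariationOn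
  let v := variationOnFromTo g univ 0
  refine ⟨fun x => (v x + g x) / 2, fun x => (v x - g x) / 2,
    (monotoneOn_univ.1 (variationOnFromTo.add_self_monotoneOn hloc (mem_univ 0))).div_const
      zero_le_two,
    (monotoneOn_univ.1 (variationOnFromTo.sub_self_monotoneOn hloc (mem_univ 0))).div_const
      zero_le_two,
    fun x => by ring, fun x y hxy => ?_⟩
  have hincr : v y - v x = variationOnFromTo g univ x y := by
    simp only [v]
    rw [← variationOnFromTo.add hloc (mem_univ 0) (mem_univ x) (mem_univ y), add_sub_cancel_left]
  have hle : variationOnFromTo g univ x y ≤ (eVariationOn g univ).toReal := by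
    rw [variationOnFromTo.eq_of_le g univ hxy]
    exact ENNReal.toReal_mono hg (eVariationOn.mono g inter_subset_left)
  linarith

namespace Monotone

variable {a : ℝ → ℝ} (ha : Monotone a)
include ha

theorem le_stieltjesFunction (x : ℝ) : a x ≤ ha.stieltjesFunction x := by
  rw [ha.stieltjesFunction_eq]
  exact ha.le_rightLim le_rfl

theorem stieltjesFunction_le {x y : ℝ} (hxy : x < y) : ha.stieltjesFunction x ≤ a y := by
  rw [ha.stieltjesFunction_eq]
  exact ha.rightLim_le hxy

theorem abs_sub_stieltjesFunction_le (x : ℝ) :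
    |a x - ha.stieltjesFunction x| ≤ ha.stieltjesFunction.measure.real {x} := by
  have hleft : Function.leftLim ha.stieltjesFunction x ≤ a x :=
    _root_.le_of_tendsto (ha.stieltjesFunction.mono.tendsto_leftLim x)
      (eventually_nhdsWithin_of_forall fun _ hy => ha.stieltjesFunction_le hy)
  rw [measureReal_def, StieltjesFunction.measure_singleton,
    ENNReal.toReal_ofReal (sub_nonneg.2 (hleft.trans (ha.le_stieltjesFunction x))),
    abs_sub_comm, abs_of_nonneg (sub_nonneg.2 (ha.le_stieltjesFunction x))]
  linarith

end Monotone

theorem StieltjesFunction.measureReal_Ioc (f : StieltjesFunction ℝ) {x y : ℝ} (hxy : x ≤ y) :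
    f.measure.real (Ioc x y) = f y - f x := by
  rw [measureReal_def, f.measure_Ioc, ENNReal.toReal_ofReal (sub_nonneg.2 (f.mono hxy))]

theorem StieltjesFunction.measure_univ_le {f : StieltjesFunction ℝ} {C : ℝ}
    (h : ∀ x y, x ≤ y → f y - f x ≤ C) : f.measure univ ≤ ENNReal.ofReal C := by
  have hunion : ⋃ n : ℕ, Ioc (-(n : ℝ)) n = univ := by
    refine eq_univ_of_forall fun x => mem_iUnion.2 ?_
    obtain ⟨n, hn⟩ := exists_nat_gt |x|
    exact ⟨n, by linarith [neg_abs_le x], by linarith [le_abs_self x]⟩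
  have hmono : Monotone fun n : ℕ => Ioc (-(n : ℝ)) n := fun m n hmn =>
    Ioc_subset_Ioc (by simpa using hmn) (by simpa using hmn)
  rw [← hunion, hmono.measure_iUnion]
  refine iSup_le fun n => ?_
  rw [f.measure_Ioc]
  exact ENNReal.ofReal_le_ofReal (h _ _ (by linarith [n.cast_nonneg (α := ℝ)]))

theorem Monotone.stieltjesFunction_measure_add_le {a b : ℝ → ℝ} (ha : Monotone a)
    (hb : Monotone b) {C : ℝ} (h : ∀ x y, x ≤ y → a y + b y - (a x + b x) ≤ C) :
    (ha.stieltjesFunction.measure + hb.stieltjesFunction.measure) univ ≤ ENNReal.ofReal C := by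
  rw [← StieltjesFunction.measure_add]
  refine StieltjesFunction.measure_univ_le fun x y hxy => ?_
  simp only [StieltjesFunction.add_apply]
  linarith [ha.le_stieltjesFunction x, hb.le_stieltjesFunction x,
    ha.stieltjesFunction_le (lt_add_one y), hb.stieltjesFunction_le (lt_add_one y),
    h x (y + 1) (by linarith)]

theorem sum_le_measureReal_univ_of_le_singleton {α : Type*} [MeasurableSpace α]
    [MeasurableSingletonClass α] {ρ : Measure α} [IsFiniteMeasure ρ] {f : α → ℝ}
    (hf : ∀ x, f x ≤ ρ.real {x}) (s : Finset α) : ∑ x ∈ s, f x ≤ ρ.real univ :=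
  (Finset.sum_le_sum fun x _ => hf x).trans
    ((sum_measureReal_singleton s).trans_le (measureReal_mono (subset_univ _)))

section Jordan

variable {α : Type*} [MeasurableSpace α] (ν₁ ν₂ : Measure α) [IsFiniteMeasure ν₁]
  [IsFiniteMeasure ν₂]

theorem posPart_real_sub_negPart_real_toJordanDecomposition {A : Set α} (hA : MeasurableSet A) :
    (ν₁.toSignedMeasure - ν₂.toSignedMeasure).toJordanDecomposition.posPart.real A -
      (ν₁.toSignedMeasure - ν₂.toSignedMeasure).toJordanDecomposition.negPart.real A =
      ν₁.real A - ν₂.real A := by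
  rw [← SignedMeasure.apply_eq_posPart_real_sub_negPart_real _ hA,
    Measure.toSignedMeasure_sub_apply hA]

theorem posPart_toJordanDecomposition_le :
    (ν₁.toSignedMeasure - ν₂.toSignedMeasure).toJordanDecomposition.posPart ≤ ν₁ := by
  set J := (ν₁.toSignedMeasure - ν₂.toSignedMeasure).toJordanDecomposition
  obtain ⟨S, hS, hPS, hNS⟩ := J.mutuallySingular
  refine Measure.le_iff.2 fun A hA => ?_
  have hN : J.negPart.real (A \ S) = 0 := by
    rw [measureReal_def, measure_mono_null (sdiff_subset_compl A S) hNS, ENNReal.toReal_zero]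
  have hP : J.posPart.real (A \ S) - J.negPart.real (A \ S) =
      ν₁.real (A \ S) - ν₂.real (A \ S) :=
    posPart_real_sub_negPart_real_toJordanDecomposition ν₁ ν₂ (hA.diff hS)
  rw [← measure_sdiff_null hPS, ← ENNReal.toReal_le_toReal (measure_ne_top _ _)
    (measure_ne_top _ _)]
  change J.posPart.real (A \ S) ≤ ν₁.real A
  linarith [measureReal_mono (μ := ν₁) (sdiff_subset (s := A) (t := S)),
    measureReal_nonneg (μ := ν₂) (s := A \ S)]

theorem negPart_toJordanDecomposition_le :
    (ν₁.toSignedMeasure - ν₂.toSignedMeasure).toJordanDecomposition.negPart ≤ ν₂ := by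
  have h := posPart_toJordanDecomposition_le ν₂ ν₁
  rwa [← neg_sub, SignedMeasure.toJordanDecomposition_neg, JordanDecomposition.neg_posPart] at h

end Jordan

namespace MeasureTheory.Measure

noncomputable def splitAtZero (μ ν : Measure ℝ) : Measure ℝ :=
  μ.restrict (Ioi 0) + ν.restrict (Iic 0)

variable (μ ν : Measure ℝ)

instance [IsFiniteMeasure μ] [IsFiniteMeasure ν] : IsFiniteMeasure (μ.splitAtZero ν) := by
  unfold splitAtZero; infer_instance

theorem splitAtZero_apply_pos_Ioc (x : ℝ) :
    μ.splitAtZero ν (Ioc 0 x) = μ (Ioc 0 x) := by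
  rw [splitAtZero, add_apply, restrict_apply measurableSet_Ioc, restrict_apply measurableSet_Ioc,
    inter_eq_left.2 Ioc_subset_Ioi_self]
  simp

theorem splitAtZero_apply_nonpos_Ioc (x : ℝ) :
    μ.splitAtZero ν (Ioc x 0) = ν (Ioc x 0) := by
  rw [splitAtZero, add_apply, restrict_apply measurableSet_Ioc, restrict_apply measurableSet_Ioc,
    inter_eq_left.2 Ioc_subset_Iic_self]
  simp

theorem splitAtZero_add_splitAtZero : μ.splitAtZero ν + ν.splitAtZero μ = μ + ν := by
  conv_rhs => rw [← μ.restrict_add_restrict_compl (measurableSet_Ioi (a := 0)),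
    ← ν.restrict_add_restrict_compl (measurableSet_Ioi (a := 0)), compl_Ioi]
  simp only [splitAtZero]
  abel

end MeasureTheory.Measure

section Density

variable {α : Type*} [MeasurableSpace α] {φ : α → ℝ} (hφm : Measurable φ) (hφ : ∀ z, 0 < φ z)
  (ρ : Measure α)
include hφm hφ

theorem integrable_mul_withDensity_inv_iff (h : α → ℝ) :
    Integrable (fun z => φ z * h z) (ρ.withDensity fun z => ENNReal.ofReal (φ z)⁻¹) ↔
      Integrable h ρ := by
  rw [integrable_withDensity_iff_integrable_smul' (by fun_prop)
    (.of_forall fun _ => ENNReal.ofReal_lt_top)]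
  refine integrable_congr (.of_forall fun z => ?_)
  simp only
  rw [ENNReal.toReal_ofReal (inv_nonneg.2 (hφ z).le), smul_eq_mul, ← mul_assoc,
    inv_mul_cancel₀ (hφ z).ne', one_mul]

theorem integral_mul_withDensity_inv (h : α → ℝ) :
    ∫ z, φ z * h z ∂ρ.withDensity (fun z => ENNReal.ofReal (φ z)⁻¹) = ∫ z, h z ∂ρ := by
  rw [integral_withDensity_eq_integral_toReal_smul (by fun_prop)
    (.of_forall fun _ => ENNReal.ofReal_lt_top)]
  refine integral_congr_ae (.of_forall fun z => ?_)
  simp only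
  rw [ENNReal.toReal_ofReal (inv_nonneg.2 (hφ z).le), smul_eq_mul, ← mul_assoc,
    inv_mul_cancel₀ (hφ z).ne', one_mul]

theorem integrable_withDensity_inv [IsFiniteMeasure ρ] :
    Integrable φ (ρ.withDensity fun z => ENNReal.ofReal (φ z)⁻¹) := by
  simpa using (integrable_mul_withDensity_inv_iff hφm hφ ρ 1).2 (integrable_const 1)

theorem setIntegral_withDensity_inv {A : Set α} (hA : MeasurableSet A) :
    ∫ z in A, φ z ∂ρ.withDensity (fun z => ENNReal.ofReal (φ z)⁻¹) = ρ.real A := by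
  rw [restrict_withDensity hA]
  simpa using integral_mul_withDensity_inv hφm hφ (ρ.restrict A) 1

variable [IsFiniteMeasure ρ] (hφ₁ : ∀ z, φ z ≤ 1) {q : ℝ} (hq : 0 ≤ q)
include hφ₁ hq

theorem integrable_rpow_of_le_one : Integrable (fun z => φ z ^ q) ρ :=
  (integrable_const 1).mono' (by fun_prop) (.of_forall fun z => by
    rw [Real.norm_of_nonneg (Real.rpow_nonneg (hφ z).le q)]
    exact Real.rpow_le_one (hφ z).le (hφ₁ z) hq)

theorem integrable_rpow_withDensity_inv :
    Integrable (fun z => φ z ^ (1 + q)) (ρ.withDensity fun z => ENNReal.ofReal (φ z)⁻¹) := by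
  simp_rw [Real.rpow_add (hφ _), Real.rpow_one]
  exact (integrable_mul_withDensity_inv_iff hφm hφ ρ _).2
    (integrable_rpow_of_le_one hφm hφ ρ hφ₁ hq)

theorem integral_rpow_withDensity_inv_le :
    ∫ z, φ z ^ (1 + q) ∂ρ.withDensity (fun z => ENNReal.ofReal (φ z)⁻¹) ≤ ρ.real univ := by
  simp_rw [Real.rpow_add (hφ _), Real.rpow_one]
  rw [integral_mul_withDensity_inv hφm hφ]
  calc ∫ z, φ z ^ q ∂ρ ≤ ∫ _, 1 ∂ρ :=
        integral_mono (integrable_rpow_of_le_one hφm hφ ρ hφ₁ hq) (integrable_const 1)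
          fun z => Real.rpow_le_one (hφ z).le (hφ₁ z) hq
    _ = ρ.real univ := by simp

end Density

theorem exists_gMu_eq_of_stieltjesFunction (F G : StieltjesFunction ℝ)
    [IsFiniteMeasure F.measure] [IsFiniteMeasure G.measure] {φ : ℝ → ℝ} (hφm : Measurable φ)
    (hφ : ∀ z, 0 < φ z) (hφ₁ : ∀ z, φ z ≤ 1) {q : ℝ} (hq : 0 ≤ q) :
    ∃ μp μn : Measure ℝ, SigmaFinite μp ∧ SigmaFinite μn ∧ μp ⟂ₘ μn ∧
      (∀ x : ℝ, IntegrableOn φ (Ioc 0 x) μp ∧ IntegrableOn φ (Ioc x 0) μp ∧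
        IntegrableOn φ (Ioc 0 x) μn ∧ IntegrableOn φ (Ioc x 0) μn) ∧
      Integrable (fun z => φ z ^ (1 + q)) (μp + μn) ∧
      ∫ z, φ z ^ (1 + q) ∂(μp + μn) ≤ (F.measure + G.measure).real univ ∧
      ∀ x, gMu φ μp μn x = (F x - F 0) - (G x - G 0) := by
  -- `gMu` integrates over `(x, 0]` with a plus sign for `x < 0`, so there `dF - dG` enters
  -- with the opposite sign.
  set ν₁ := F.measure.splitAtZero G.measure
  set ν₂ := G.measure.splitAtZero F.measure
  set J := (ν₁.toSignedMeasure - ν₂.toSignedMeasure).toJordanDecomposition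
  have hP := integrable_withDensity_inv hφm hφ J.posPart
  have hN := integrable_withDensity_inv hφm hφ J.negPart
  have hJ : ∀ A, MeasurableSet A → J.posPart.real A - J.negPart.real A = ν₁.real A - ν₂.real A :=
    fun A hA => posPart_real_sub_negPart_real_toJordanDecomposition ν₁ ν₂ hA
  refine ⟨_, _, inferInstance, inferInstance, J.mutuallySingular.mono_ac
    (withDensity_absolutelyContinuous _ _) (withDensity_absolutelyContinuous _ _),
    fun x => ⟨hP.integrableOn, hP.integrableOn, hN.integrableOn, hN.integrableOn⟩,
    (integrable_rpow_withDensity_inv hφm hφ _ hφ₁ hq).add_measure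
      (integrable_rpow_withDensity_inv hφm hφ _ hφ₁ hq), ?_, fun x => ?_⟩
  · rw [integral_add_measure (integrable_rpow_withDensity_inv hφm hφ _ hφ₁ hq)
      (integrable_rpow_withDensity_inv hφm hφ _ hφ₁ hq)]
    calc _ ≤ J.posPart.real univ + J.negPart.real univ :=
          add_le_add (integral_rpow_withDensity_inv_le hφm hφ _ hφ₁ hq)
            (integral_rpow_withDensity_inv_le hφm hφ _ hφ₁ hq)
      _ ≤ ν₁.real univ + ν₂.real univ :=
          add_le_add
            (ENNReal.toReal_mono (measure_ne_top _ _) (posPart_toJordanDecomposition_le ν₁ ν₂ univ))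
            (ENNReal.toReal_mono (measure_ne_top _ _) (negPart_toJordanDecomposition_le ν₁ ν₂ univ))
      _ = (F.measure + G.measure).real univ := by
          rw [← measureReal_add_apply, Measure.splitAtZero_add_splitAtZero]
  · simp only [gMu, setIntegral_withDensity_inv hφm hφ _ measurableSet_Ioc,
      hJ _ measurableSet_Ioc]
    split_ifs with hx
    · simp only [ν₁, ν₂, measureReal_def, Measure.splitAtZero_apply_pos_Ioc]
      rw [← measureReal_def, ← measureReal_def, F.measureReal_Ioc hx, G.measureReal_Ioc hx]
    · have hx : x ≤ 0 := (not_le.1 hx).le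
      simp only [ν₁, ν₂, measureReal_def, Measure.splitAtZero_apply_nonpos_Ioc]
      rw [← measureReal_def, ← measureReal_def, F.measureReal_Ioc hx, G.measureReal_Ioc hx]
      ring

theorem exists_isGRep_sub_of_monotone {p : ℝ} (hp : 0 ≤ p) {φ : ℝ → ℝ} (hφm : Measurable φ)
    (hφ : ∀ z, 0 < φ z) (hφ₁ : ∀ z, φ z ≤ 1) {a b : ℝ → ℝ} (ha : Monotone a) (hb : Monotone b)
    {C : ℝ} (hC : ∀ x y, x ≤ y → a y + b y - (a x + b x) ≤ C) :
    ∃ c μp μn Δ, IsGRep p φ (fun x => a x - b x) c μp μn Δ ∧ Vpphi p φ μp μn Δ ≤ 2 * C := by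
  set F := ha.stieltjesFunction
  set G := hb.stieltjesFunction
  have hmass : (F.measure + G.measure) univ ≤ ENNReal.ofReal C :=
    ha.stieltjesFunction_measure_add_le hb hC
  have hmass_real : (F.measure + G.measure).real univ ≤ C :=
    ENNReal.toReal_le_of_le_ofReal (by simpa using hC 0 0 le_rfl) hmass
  have : IsFiniteMeasure (F.measure + G.measure) := ⟨hmass.trans_lt ENNReal.ofReal_lt_top⟩
  have : IsFiniteMeasure F.measure :=
    isFiniteMeasure_of_le (F.measure + G.measure) (Measure.le_add_right le_rfl)
  have : IsFiniteMeasure G.measure :=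
    isFiniteMeasure_of_le (F.measure + G.measure) (Measure.le_add_left le_rfl)
  obtain ⟨μp, μn, hμp, hμn, hsing, hloc, hint, hint_le, hgMu⟩ :=
    exists_gMu_eq_of_stieltjesFunction F G hφm hφ hφ₁ (one_div_nonneg.2 hp)
  set Δ := fun x => (a x - F x) - (b x - G x)
  have hjump : ∀ x, |Δ x| * φ x ^ (1 / p) ≤ (F.measure + G.measure).real {x} := fun x =>
    calc |Δ x| * φ x ^ (1 / p) ≤ |a x - F x| + |b x - G x| :=
          (mul_le_of_le_one_right (abs_nonneg _)
            (Real.rpow_le_one (hφ x).le (hφ₁ x) (one_div_nonneg.2 hp))).trans (abs_sub _ _)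
      _ ≤ F.measure.real {x} + G.measure.real {x} :=
          add_le_add (ha.abs_sub_stieltjesFunction_le x) (hb.abs_sub_stieltjesFunction_le x)
      _ = (F.measure + G.measure).real {x} := (measureReal_add_apply ..).symm
  have hsummable : Summable fun x => |Δ x| * φ x ^ (1 / p) :=
    summable_of_sum_le (fun x => mul_nonneg (abs_nonneg _) (Real.rpow_nonneg (hφ x).le _))
      (sum_le_measureReal_univ_of_le_singleton hjump)
  refine ⟨F 0 - G 0, μp, μn, Δ, ⟨hμp, hμn, hsing, hloc, hint, ?_, hsummable, fun x => ?_⟩, ?_⟩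
  · exact hsummable.countable_support.mono fun x hx =>
      mul_ne_zero (abs_ne_zero.2 hx) (Real.rpow_pos_of_pos (hφ x) _).ne'
  · rw [hgMu]
    ring
  · unfold Vpphi
    linarith [hsummable.tsum_le_of_sum_le (sum_le_measureReal_univ_of_le_singleton hjump)]

/-- Every function of bounded variation belongs to `G_{p,φ}`, with a representation whose
`(p,φ)`-variation is bounded by a constant multiple of the total variation `V(g)`. -/
theorem bv_subset_G (p : ℝ) (hp : 1 ≤ p) (φ : ℝ → ℝ) (hφ : IsBump φ)
    (g : ℝ → ℝ) (V : ℝ) (hg : eVariationOn g Set.univ = ENNReal.ofReal V) (hV : 0 ≤ V) :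
    ∃ c μp μn Δ, IsGRep p φ g c μp μn Δ ∧ Vpphi p φ μp μn Δ ≤ 2 * V := by
  obtain ⟨hφ₀, hφ₁, hφ_mono, hφ_anti, -, -⟩ := hφ
  have hgbv : BoundedVariationOn g univ := by
    rw [BoundedVariationOn, hg]
    exact ENNReal.ofReal_ne_top
  obtain ⟨a, b, ha, hb, hgab, hab⟩ := exists_monotone_sub_of_boundedVariationOn hgbv
  rw [hg, ENNReal.toReal_ofReal hV] at hab
  obtain rfl : g = fun x => a x - b x := funext hgab
  exact exists_isGRep_sub_of_monotone (by linarith)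
    (measurable_of_monotoneOn_Iic_of_antitoneOn_Ioi hφ_mono hφ_anti) hφ₀ hφ₁ ha hb hab
end

section
/- Fix p ∈ [1,∞) and a bump function φ that decays faster than any polynomial, i.e., for every m > 0 there is C_m with φ(x) ≤ C_m |x|^{−m} for |x| ≥ 1. Then every polynomial g : ℝ → ℝ belongs to G_{p,φ}; concretely, g = g(0) + g^μ for the signed measure dμ(z) = sgn(z) g'(z)/φ(z) dz, and V_{p,φ}(g) = ∫_ℝ φ(z)^{1/p} |g'(z)| dz < ∞. -/
/-! The derivative of a polynomial grows at most polynomially, so it is integrable against the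
rapidly decreasing weight `φ ^ (1/p)`. The positive and negative parts of the density
`sgn(z) g'(z) / φ(z)` give mutually singular measures `μp`, `μn`. Integrating `φ` against
`μp - μn` over `(0, x]` or `(x, 0]` gives back `∫ g'` with the sign of `x`, so the fundamental
theorem of calculus yields `g = g(0) + g^μ`; integrating `φ ^ (1 + 1/p)` against `μp + μn` gives
`∫ φ ^ (1/p) |g'|`. -/

open MeasureTheory Filter Set

open Asymptotics

theorem IsBump.measurable {φ : ℝ → ℝ} (hφ : IsBump φ) : Measurable φ := by
  obtain ⟨-, -, hmono, hanti, -⟩ := hφ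
  refine measurable_of_restrict_of_restrict_compl (measurableSet_Iic (a := 0)) ?_ ?_
  · exact Monotone.measurable fun x y hxy => hmono x.2 y.2 hxy
  · exact Antitone.measurable fun x y hxy =>
      hanti (not_le.mp x.2 : (0 : ℝ) < x) (not_le.mp y.2 : (0 : ℝ) < y) hxy

theorem Real.measurable_sign : Measurable Real.sign :=
  Measurable.ite measurableSet_Iio measurable_const
    (Measurable.ite measurableSet_Ioi measurable_const measurable_const)

theorem Real.abs_sign_of_ne_zero {r : ℝ} (hr : r ≠ 0) : |Real.sign r| = 1 := by
  rcases Real.sign_apply_eq_of_ne_zero r hr with h | h <;> simp [h]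

def RapidlyDecreasing (ψ : ℝ → ℝ) : Prop :=
  ∀ m : ℝ, 0 < m → ∃ C : ℝ, ∀ x : ℝ, 1 ≤ |x| → ψ x ≤ C * |x| ^ (-m)

theorem RapidlyDecreasing.rpow {ψ : ℝ → ℝ} (hψ : RapidlyDecreasing ψ) (hψ0 : ∀ x, 0 ≤ ψ x)
    {r : ℝ} (hr : 0 < r) : RapidlyDecreasing fun x => ψ x ^ r := by
  intro m hm
  obtain ⟨C, hC⟩ := hψ (m / r) (by positivity)
  have hC0 : 0 ≤ C := by simpa using (hψ0 1).trans (hC 1 (by simp))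
  refine ⟨C ^ r, fun x hx => ?_⟩
  have hx0 : 0 ≤ |x| := abs_nonneg x
  calc ψ x ^ r ≤ (C * |x| ^ (-(m / r))) ^ r := by gcongr; exacts [hψ0 x, hC x hx]
    _ = C ^ r * |x| ^ (-m) := by
      rw [Real.mul_rpow hC0 (Real.rpow_nonneg hx0 _), ← Real.rpow_mul hx0]
      field_simp

theorem RapidlyDecreasing.isBigO_cocompact {ψ : ℝ → ℝ} (hψ : RapidlyDecreasing ψ)
    (hψ0 : ∀ x, 0 ≤ ψ x) {m : ℝ} (hm : 0 < m) :
    ψ =O[cocompact ℝ] fun x => |x| ^ (-m) := by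
  obtain ⟨C, hC⟩ := hψ m hm
  refine IsBigO.of_bound C ?_
  filter_upwards [tendsto_norm_cocompact_atTop.eventually_ge_atTop 1] with x hx
  rw [Real.norm_of_nonneg (hψ0 x), Real.norm_of_nonneg (Real.rpow_nonneg (abs_nonneg x) _)]
  exact hC x hx

theorem Polynomial.isBigO_cocompact_pow_natDegree (Q : Polynomial ℝ) :
    (fun x => Q.eval x) =O[cocompact ℝ] fun x => |x| ^ Q.natDegree := by
  refine IsBigO.of_bound (∑ i ∈ Finset.range (Q.natDegree + 1), |Q.coeff i|) ?_
  filter_upwards [tendsto_norm_cocompact_atTop.eventually_ge_atTop 1] with x hx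
  simp only [Real.norm_eq_abs, abs_pow, abs_abs] at hx ⊢
  rw [Q.eval_eq_sum_range, Finset.sum_mul]
  refine (Finset.abs_sum_le_sum_abs _ _).trans (Finset.sum_le_sum fun i hi => ?_)
  rw [abs_mul, abs_pow]
  gcongr
  exact Nat.lt_succ_iff.mp (Finset.mem_range.mp hi)

theorem isBigO_cocompact_abs_rpow_neg_two :
    (fun x : ℝ => |x| ^ (-2 : ℝ)) =O[cocompact ℝ] fun x => (1 + ‖x‖) ^ (-2 : ℝ) := by
  refine IsBigO.of_bound 4 ?_
  filter_upwards [tendsto_norm_cocompact_atTop.eventually_ge_atTop 1] with x hx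
  rw [Real.norm_eq_abs] at hx
  have hx0 : 0 < |x| := one_pos.trans_le hx
  rw [Real.norm_of_nonneg (by positivity), Real.norm_of_nonneg (by positivity), Real.norm_eq_abs]
  calc |x| ^ (-2 : ℝ) = 4 * (2 * |x|) ^ (-2 : ℝ) := by
        rw [Real.mul_rpow (by norm_num) hx0.le, ← mul_assoc]; norm_num
    _ ≤ 4 * (1 + |x|) ^ (-2 : ℝ) := by
        gcongr 4 * ?_
        exact Real.rpow_le_rpow_of_nonpos (by positivity) (by linarith) (by norm_num)

theorem RapidlyDecreasing.integrable_mul_abs_eval {ψ : ℝ → ℝ} (hψ : RapidlyDecreasing ψ)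
    (hψm : Measurable ψ) (hψ0 : ∀ x, 0 ≤ ψ x) {B : ℝ} (hψB : ∀ x, ψ x ≤ B)
    (Q : Polynomial ℝ) : Integrable fun x => ψ x * |Q.eval x| := by
  have hloc : LocallyIntegrable (fun x => ψ x * |Q.eval x|) :=
    (Q.continuous.abs.const_mul B).locallyIntegrable.mono
      (hψm.mul Q.continuous.measurable.abs).aestronglyMeasurable
      (ae_of_all _ fun x => by
        rw [Real.norm_of_nonneg (mul_nonneg (hψ0 x) (abs_nonneg _)),
          Real.norm_of_nonneg (mul_nonneg ((hψ0 x).trans (hψB x)) (abs_nonneg _))]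
        exact mul_le_mul_of_nonneg_right (hψB x) (abs_nonneg _))
  have hpow : (fun x : ℝ => |x| ^ (-(Q.natDegree + 2 : ℝ)) * |x| ^ Q.natDegree)
      =ᶠ[cocompact ℝ] fun x => |x| ^ (-2 : ℝ) := by
    filter_upwards [tendsto_norm_cocompact_atTop.eventually_ge_atTop 1] with x hx
    rw [← Real.rpow_natCast, ← Real.rpow_add (x := |x|) (one_pos.trans_le hx)]
    ring_nf
  refine hloc.integrable_of_isBigO_cocompact ?_
    ((integrable_one_add_norm (E := ℝ) (r := 2) (by simp)).integrableAtFilter _)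
  exact (((hψ.isBigO_cocompact hψ0 (by positivity)).mul
    Q.isBigO_cocompact_pow_natDegree.norm_left).trans_eventuallyEq hpow).trans
    isBigO_cocompact_abs_rpow_neg_two

section WithDensityOfReal

variable {α : Type*} [MeasurableSpace α] {μ : Measure α} {f g : α → ℝ}

theorem integrable_max_zero_mul_of_integrable_abs_mul (hf : Measurable f)
    (hg : AEStronglyMeasurable g μ) (hfg : Integrable (fun x => |f x| * g x) μ) :
    Integrable (fun x => max (f x) 0 * g x) μ :=
  hfg.mono ((hf.max measurable_const).aestronglyMeasurable.mul hg) <| ae_of_all _ fun x => by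
    rw [norm_mul, norm_mul, Real.norm_of_nonneg (le_max_right _ _), Real.norm_eq_abs |f x|,
      abs_abs]
    exact mul_le_mul_of_nonneg_right (max_le (le_abs_self _) (abs_nonneg _)) (norm_nonneg _)

theorem integrable_withDensity_ofReal (hf : Measurable f) (hg : AEStronglyMeasurable g μ)
    (hfg : Integrable (fun x => |f x| * g x) μ) :
    Integrable g (μ.withDensity fun x => ENNReal.ofReal (f x)) := by
  rw [integrable_withDensity_iff hf.ennreal_ofReal (ae_of_all _ fun _ => ENNReal.ofReal_lt_top)]
  simpa only [ENNReal.toReal_ofReal', mul_comm (g _)] using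
    integrable_max_zero_mul_of_integrable_abs_mul hf hg hfg

theorem integral_withDensity_ofReal (hf : Measurable f) :
    ∫ x, g x ∂μ.withDensity (fun x => ENNReal.ofReal (f x)) = ∫ x, max (f x) 0 * g x ∂μ := by
  rw [integral_withDensity_eq_integral_toReal_smul hf.ennreal_ofReal
    (ae_of_all _ fun _ => ENNReal.ofReal_lt_top)]
  simp only [ENNReal.toReal_ofReal', smul_eq_mul]

theorem integrable_withDensity_ofReal_add_neg (hf : Measurable f)
    (hg : AEStronglyMeasurable g μ) (hfg : Integrable (fun x => |f x| * g x) μ) :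
    Integrable g ((μ.withDensity fun x => ENNReal.ofReal (f x)) +
      μ.withDensity fun x => ENNReal.ofReal (-f x)) :=
  (integrable_withDensity_ofReal hf hg hfg).add_measure
    (integrable_withDensity_ofReal hf.fun_neg hg (by simpa only [abs_neg] using hfg))

theorem integral_withDensity_ofReal_sub_neg (hf : Measurable f)
    (hg : AEStronglyMeasurable g μ) (hfg : Integrable (fun x => |f x| * g x) μ) :
    (∫ x, g x ∂μ.withDensity fun x => ENNReal.ofReal (f x)) -
      (∫ x, g x ∂μ.withDensity fun x => ENNReal.ofReal (-f x)) = ∫ x, f x * g x ∂μ := by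
  rw [integral_withDensity_ofReal hf, integral_withDensity_ofReal hf.fun_neg,
    ← integral_sub (integrable_max_zero_mul_of_integrable_abs_mul hf hg hfg)
      (integrable_max_zero_mul_of_integrable_abs_mul hf.fun_neg hg
        (by simpa only [abs_neg] using hfg))]
  simp only [← sub_mul, max_zero_sub_max_neg_zero_eq_self]

theorem integral_withDensity_ofReal_add_neg (hf : Measurable f)
    (hg : AEStronglyMeasurable g μ) (hfg : Integrable (fun x => |f x| * g x) μ) :
    ∫ x, g x ∂((μ.withDensity fun x => ENNReal.ofReal (f x)) +
      μ.withDensity fun x => ENNReal.ofReal (-f x)) = ∫ x, |f x| * g x ∂μ := by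
  rw [integral_add_measure (integrable_withDensity_ofReal hf hg hfg)
      (integrable_withDensity_ofReal hf.fun_neg hg (by simpa only [abs_neg] using hfg)),
    integral_withDensity_ofReal hf, integral_withDensity_ofReal hf.fun_neg,
    ← integral_add (integrable_max_zero_mul_of_integrable_abs_mul hf hg hfg)
      (integrable_max_zero_mul_of_integrable_abs_mul hf.fun_neg hg
        (by simpa only [abs_neg] using hfg))]
  simp only [← add_mul, max_zero_add_max_neg_zero_eq_abs_self]

end WithDensityOfReal

noncomputable def signedDensity (φ F' : ℝ → ℝ) (z : ℝ) : ℝ :=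
  Real.sign z * F' z / φ z

section SignedDensity

variable {φ F F' : ℝ → ℝ}

theorem measurable_signedDensity (hφ : Measurable φ) (hF' : Measurable F') :
    Measurable (signedDensity φ F') :=
  (Real.measurable_sign.mul hF').div hφ

theorem signedDensity_mul (hφ : ∀ z, 0 < φ z) (z : ℝ) :
    signedDensity φ F' z * φ z = Real.sign z * F' z :=
  div_mul_cancel₀ _ (hφ z).ne'

theorem abs_signedDensity_mul_ae_eq (hφ : ∀ z, 0 < φ z) :
    (fun z => |signedDensity φ F' z| * φ z) =ᵐ[volume] fun z => |F' z| := by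
  filter_upwards [volume.ae_ne (0 : ℝ)] with z hz
  rw [← abs_of_pos (hφ z), ← abs_mul, signedDensity_mul hφ, abs_mul,
    Real.abs_sign_of_ne_zero hz, one_mul]

theorem integrableOn_Ioc_abs_signedDensity_mul (hφ : ∀ z, 0 < φ z) (hF' : Continuous F')
    (a b : ℝ) : IntegrableOn (fun z => |signedDensity φ F' z| * φ z) (Ioc a b) :=
  hF'.abs.integrableOn_Ioc.congr_fun_ae
    ((abs_signedDensity_mul_ae_eq hφ).filter_mono ae_restrict_le).symm

theorem integrableOn_Ioc_withDensity_signedDensity (hφ : ∀ z, 0 < φ z)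
    (hφm : Measurable φ) (hF' : Continuous F') (a b : ℝ) :
    IntegrableOn φ (Ioc a b) (volume.withDensity fun z => ENNReal.ofReal (signedDensity φ F' z)) ∧
      IntegrableOn φ (Ioc a b)
        (volume.withDensity fun z => ENNReal.ofReal (-signedDensity φ F' z)) := by
  have hfm := measurable_signedDensity hφm hF'.measurable
  have hint := integrableOn_Ioc_abs_signedDensity_mul hφ hF' a b
  simp only [IntegrableOn, restrict_withDensity measurableSet_Ioc]
  exact ⟨integrable_withDensity_ofReal hfm hφm.aestronglyMeasurable hint,
    integrable_withDensity_ofReal hfm.fun_neg hφm.aestronglyMeasurable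
      (by simpa only [IntegrableOn, abs_neg] using hint)⟩

theorem setIntegral_Ioc_withDensity_signedDensity_sub (hφ : ∀ z, 0 < φ z)
    (hφm : Measurable φ) (hF' : Continuous F') (a b : ℝ) :
    (∫ z in Ioc a b, φ z ∂volume.withDensity fun z => ENNReal.ofReal (signedDensity φ F' z)) -
      (∫ z in Ioc a b, φ z ∂volume.withDensity fun z => ENNReal.ofReal (-signedDensity φ F' z))
      = ∫ z in Ioc a b, Real.sign z * F' z := by
  rw [restrict_withDensity measurableSet_Ioc, restrict_withDensity measurableSet_Ioc,
    integral_withDensity_ofReal_sub_neg (measurable_signedDensity hφm hF'.measurable)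
      hφm.aestronglyMeasurable (integrableOn_Ioc_abs_signedDensity_mul hφ hF' a b)]
  simp only [signedDensity_mul hφ]

theorem gMu_withDensity_signedDensity (hφ : ∀ z, 0 < φ z) (hφm : Measurable φ)
    (hF' : Continuous F') (hF : ∀ t, HasDerivAt F (F' t) t) (x : ℝ) :
    gMu φ (volume.withDensity fun z => ENNReal.ofReal (signedDensity φ F' z))
      (volume.withDensity fun z => ENNReal.ofReal (-signedDensity φ F' z)) x = F x - F 0 := by
  have ftc : ∀ a b, ∫ z in a..b, F' z = F b - F a := fun a b =>
    intervalIntegral.integral_eq_sub_of_hasDerivAt (fun t _ => hF t) (hF'.intervalIntegrable a b)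
  rw [gMu]
  split_ifs with hx
  · rw [setIntegral_Ioc_withDensity_signedDensity_sub hφ hφm hF',
      setIntegral_congr_fun measurableSet_Ioc fun z hz => by rw [Real.sign_of_pos hz.1, one_mul],
      ← intervalIntegral.integral_of_le hx, ftc]
  · rw [setIntegral_Ioc_withDensity_signedDensity_sub hφ hφm hF', integral_Ioc_eq_integral_Ioo,
      setIntegral_congr_fun measurableSet_Ioo fun z hz => by
        rw [Real.sign_of_neg hz.2, neg_one_mul],
      integral_neg, ← integral_Ioc_eq_integral_Ioo,
      ← intervalIntegral.integral_of_le (not_le.mp hx).le, ftc, neg_sub]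

theorem abs_signedDensity_mul_rpow_ae_eq (hφ : ∀ z, 0 < φ z) (r : ℝ) :
    (fun z => |signedDensity φ F' z| * φ z ^ (1 + r)) =ᵐ[volume] fun z => φ z ^ r * |F' z| := by
  filter_upwards [abs_signedDensity_mul_ae_eq (F' := F') hφ] with z hz
  rw [Real.rpow_add (hφ z), Real.rpow_one, ← hz]
  ring

theorem integrable_rpow_withDensity_signedDensity (hφ : ∀ z, 0 < φ z) (hφm : Measurable φ)
    (hF'm : Measurable F') {r : ℝ} (hint : Integrable fun z => φ z ^ r * |F' z|) :
    Integrable (fun z => φ z ^ (1 + r))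
      ((volume.withDensity fun z => ENNReal.ofReal (signedDensity φ F' z)) +
        volume.withDensity fun z => ENNReal.ofReal (-signedDensity φ F' z)) :=
  integrable_withDensity_ofReal_add_neg (measurable_signedDensity hφm hF'm)
    (hφm.pow_const _).aestronglyMeasurable
    (hint.congr (abs_signedDensity_mul_rpow_ae_eq hφ r).symm)

theorem integral_rpow_withDensity_signedDensity (hφ : ∀ z, 0 < φ z) (hφm : Measurable φ)
    (hF'm : Measurable F') {r : ℝ} (hint : Integrable fun z => φ z ^ r * |F' z|) :
    ∫ z, φ z ^ (1 + r) ∂((volume.withDensity fun z => ENNReal.ofReal (signedDensity φ F' z)) +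
        volume.withDensity fun z => ENNReal.ofReal (-signedDensity φ F' z)) =
      ∫ z, φ z ^ r * |F' z| := by
  rw [integral_withDensity_ofReal_add_neg (measurable_signedDensity hφm hF'm)
    (hφm.pow_const _).aestronglyMeasurable
    (hint.congr (abs_signedDensity_mul_rpow_ae_eq hφ r).symm)]
  exact integral_congr_ae (abs_signedDensity_mul_rpow_ae_eq hφ r)

end SignedDensity

/-- If the bump function `φ` decays faster than any polynomial, then every polynomial `g`
belongs to `G_{p,φ}`: concretely `g = g(0) + g^μ` with `dμ(z) = sgn(z) g'(z)/φ(z) dz` and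
`V_{p,φ}(g) = ∫ φ^{1/p} |g'| dz < ∞`. -/
theorem polynomials_mem_G (p : ℝ) (hp : 1 ≤ p) (φ : ℝ → ℝ) (hφ : IsBump φ)
    (hdecay : ∀ m : ℝ, 0 < m → ∃ Cm : ℝ, ∀ x : ℝ, 1 ≤ |x| → φ x ≤ Cm * |x| ^ (-m))
    (P : Polynomial ℝ) :
    ∃ μp μn : Measure ℝ,
      μp = volume.withDensity (fun z => ENNReal.ofReal
        (Real.sign z * Polynomial.eval z (Polynomial.derivative P) / φ z)) ∧
      μn = volume.withDensity (fun z => ENNReal.ofReal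
        (-(Real.sign z * Polynomial.eval z (Polynomial.derivative P) / φ z))) ∧
      IsGRep p φ (fun x => Polynomial.eval x P) (Polynomial.eval 0 P) μp μn 0 ∧
      Vpphi p φ μp μn 0 =
        ∫ z : ℝ, φ z ^ (1 / p) * |Polynomial.eval z (Polynomial.derivative P)| ∧
      Integrable (fun z : ℝ =>
        φ z ^ (1 / p) * |Polynomial.eval z (Polynomial.derivative P)|) := by
  have hφm := hφ.measurable
  obtain ⟨hφ0, hφ1, -⟩ := hφ
  set F' : ℝ → ℝ := fun z => P.derivative.eval z
  have hF' : Continuous F' := P.derivative.continuous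
  have hp0 : 0 < 1 / p := by positivity
  have hint : Integrable fun z => φ z ^ (1 / p) * |F' z| :=
    (RapidlyDecreasing.rpow hdecay (fun z => (hφ0 z).le) hp0).integrable_mul_abs_eval
      (hφm.pow_const _) (fun z => Real.rpow_nonneg (hφ0 z).le _)
      (fun z => Real.rpow_le_one (hφ0 z).le (hφ1 z) hp0.le) P.derivative
  have hloc := integrableOn_Ioc_withDensity_signedDensity hφ0 hφm hF'
  refine ⟨volume.withDensity fun z => ENNReal.ofReal (signedDensity φ F' z),
    volume.withDensity fun z => ENNReal.ofReal (-signedDensity φ F' z), rfl, rfl,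
    ⟨inferInstance, inferInstance,
      withDensity_ofReal_mutuallySingular (measurable_signedDensity hφm hF'.measurable),
      fun x => ⟨(hloc 0 x).1, (hloc x 0).1, (hloc 0 x).2, (hloc x 0).2⟩,
      integrable_rpow_withDensity_signedDensity hφ0 hφm hF'.measurable hint,
      by simp, by simp, fun x => ?_⟩, ?_, hint⟩
  · rw [gMu_withDensity_signedDensity hφ0 hφm hF' P.hasDerivAt x, Pi.zero_apply]
    ring
  · simp only [Vpphi, Pi.zero_apply, abs_zero, zero_mul, tsum_zero, add_zero]
    exact integral_rpow_withDensity_signedDensity hφ0 hφm hF'.measurable hint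
end
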